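/- For every continuous function f : Ω → ℝ: ‖[D, π(M_f)]‖ = |√(L(|Kf − f|²))|_∞ = sup over x ∈ Ω of √( |f(x) − f(0x)|²/2 + |f(x) − f(1x)|²/2 ). -/

import Mathlib

open MeasureTheory ContinuousLinearMap
open scoped RealInnerProductSpace InnerProductSpace ENNReal

noncomputable section

/-- The shift space `Ω = {0,1}^ℕ`, with `false` playing the role of the symbol `0`
and `true` of the symbol `1`. -/
abbrev Ω : Type := ℕ → Bool

/-- The shift map `σ`, `σ(x)ₙ = x_{n+1}`. -/
def shiftMap : Ω → Ω := fun x n => x (n + 1)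

/-- Prepending a symbol: `consSeq a x = ax`. -/
def consSeq (a : Bool) (x : Ω) : Ω := fun n => Nat.casesOn n a (fun k => x k)

/-- The cylinder set `[w]` of sequences beginning with the finite word `w`. -/
def cylinder (w : List Bool) : Set Ω := {x | ∀ i : Fin w.length, x (i : ℕ) = w.get i}

/-- The Hilbert space `L²(μ)` (real). -/
abbrev E (μ : Measure Ω) := Lp (α := Ω) ℝ 2 μ

/-- The Hilbert space `H = L²(μ) × L²(μ)` with the norm `√(‖φ‖² + ‖ψ‖²)`. -/
abbrev HS (μ : Measure Ω) := WithLp 2 (E μ × E μ)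

variable {μ : Measure Ω}

/-- The diagonal block operator `(φ, ψ) ↦ (A₁φ, A₂ψ)` on `H`. -/
def blockDiag (A₁ A₂ : E μ →L[ℝ] E μ) : HS μ →L[ℝ] HS μ :=
  ((WithLp.prodContinuousLinearEquiv 2 ℝ (E μ) (E μ)).symm.toContinuousLinearMap).comp
    (((A₁.comp (ContinuousLinearMap.fst ℝ (E μ) (E μ))).prod
        (A₂.comp (ContinuousLinearMap.snd ℝ (E μ) (E μ)))).comp
      (WithLp.prodContinuousLinearEquiv 2 ℝ (E μ) (E μ)).toContinuousLinearMap)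

/-- The antidiagonal block operator `(φ, ψ) ↦ (A₁ψ, A₂φ)` on `H`. -/
def blockAntidiag (A₁ A₂ : E μ →L[ℝ] E μ) : HS μ →L[ℝ] HS μ :=
  ((WithLp.prodContinuousLinearEquiv 2 ℝ (E μ) (E μ)).symm.toContinuousLinearMap).comp
    (((A₁.comp (ContinuousLinearMap.snd ℝ (E μ) (E μ))).prod
        (A₂.comp (ContinuousLinearMap.fst ℝ (E μ) (E μ)))).comp
      (WithLp.prodContinuousLinearEquiv 2 ℝ (E μ) (E μ)).toContinuousLinearMap)

/-- The diagonal representation `π(A)(φ,ψ) = (Aφ, Aψ)`. -/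
def diagRep (A : E μ →L[ℝ] E μ) : HS μ →L[ℝ] HS μ := blockDiag A A

/-- The Dirac operator `D(φ,ψ) = (Kψ, Lφ)` associated with the pair `(K, L)`. -/
def dirac (K L : E μ →L[ℝ] E μ) : HS μ →L[ℝ] HS μ := blockAntidiag K L

/-- The commutator `[D, π(A)]`. -/
def commD (K L A : E μ →L[ℝ] E μ) : HS μ →L[ℝ] HS μ :=
  (dirac K L).comp (diagRep A) - (diagRep A).comp (dirac K L)

/-- The rank-one orthogonal projection onto the span of the unit vector `ψ`:
`φ ↦ ⟪ψ, φ⟫ • ψ`. -/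
def rankOneProj (ψ : E μ) : E μ →L[ℝ] E μ := (innerSL ℝ ψ).smulRight ψ

/-- The Haar-basis element `e_w = 2^{ℓ(w)/2} (χ_{[w1]} - χ_{[w0]})`, as a function on `Ω`. -/
def haarFun (w : List Bool) : Ω → ℝ := fun x =>
  (2 : ℝ) ^ ((w.length : ℝ) / 2) *
    ((cylinder (w ++ [true])).indicator 1 x - (cylinder (w ++ [false])).indicator 1 x)

lemma continuous_shiftMap : Continuous shiftMap :=
  continuous_pi fun n => continuous_apply (n + 1)

lemma continuous_consSeq (a : Bool) : Continuous (consSeq a) := by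
  apply continuous_pi
  intro n
  cases n with
  | zero => exact continuous_const
  | succ k => exact continuous_apply k

/-- The Koopman operator on continuous functions: `f ↦ f ∘ σ`. -/
def koopmanC (f : C(Ω, ℝ)) : C(Ω, ℝ) := f.comp ⟨shiftMap, continuous_shiftMap⟩

/-- The Ruelle operator on continuous functions: `(Lf)(x) = (f(0x) + f(1x))/2`. -/
def ruelleC (f : C(Ω, ℝ)) : C(Ω, ℝ) :=
  ⟨fun x => (f (consSeq false x) + f (consSeq true x)) / 2,
    ((f.continuous.comp (continuous_consSeq false)).add
      (f.continuous.comp (continuous_consSeq true))).div_const 2⟩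

end

/-!
With `T = [K, M_f]`, the identities `L = K†` and `M_f = M_f†` give `[D, π(M_f)] = (T, -T†)` in
antidiagonal block form, so its norm is `‖T‖`. Pointwise `T g = (f ∘ σ - f) · (g ∘ σ)`, and
since the Bernoulli measure splits as `μ = ½ (0·)_* μ + ½ (1·)_* μ` one has
`∫ H · (φ ∘ σ) dμ = ∫ L(H) · φ dμ`; hence `‖T g‖² = ∫ L(|Kf - f|²) g² dμ`. Such an operator has the
norm of multiplication by `√(L(|Kf - f|²))`, which is its sup norm because `μ` charges every
nonempty open set: test `T` against indicators of the open sets `{L(|Kf - f|²) > c}`.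
-/

lemma PiNat.isPiSystem_cylinders {E : ℕ → Type*} :
    IsPiSystem {s : Set (∀ n, E n) | ∃ x n, s = PiNat.cylinder x n} := by
  rintro _ ⟨x, n, rfl⟩ _ ⟨y, m, rfl⟩ ⟨z, hzx, hzy⟩
  rw [← PiNat.mem_cylinder_iff_eq.1 hzx, ← PiNat.mem_cylinder_iff_eq.1 hzy]
  rcases le_total n m with h | h
  · exact ⟨z, m, Set.inter_eq_right.2 (PiNat.cylinder_anti z h)⟩
  · exact ⟨z, n, Set.inter_eq_left.2 (PiNat.cylinder_anti z h)⟩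

lemma MeasureTheory.Measure.ext_of_piNatCylinder {β : Type*} [TopologicalSpace β]
    [DiscreteTopology β] [Countable β] [MeasurableSpace β] [BorelSpace β]
    {ν ν' : Measure (ℕ → β)} [IsFiniteMeasure ν]
    (h : ∀ x n, ν (PiNat.cylinder x n) = ν' (PiNat.cylinder x n)) : ν = ν' := by
  refine ext_of_generate_finite _ ?_ PiNat.isPiSystem_cylinders ?_ ?_
  · rw [BorelSpace.measurable_eq (α := ℕ → β)]
    exact (PiNat.isTopologicalBasis_cylinders fun _ => β).borel_eq_generateFrom
  · rintro _ ⟨x, n, rfl⟩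
    exact h x n
  · rcases isEmpty_or_nonempty (ℕ → β) with hΩ | hΩ
    · simp [Set.univ_eq_empty_iff.2 hΩ]
    · simpa [PiNat.cylinder_zero] using h (Classical.arbitrary _) 0

lemma MeasureTheory.Measure.isOpenPosMeasure_of_piNatCylinder {β : Type*} [TopologicalSpace β]
    [DiscreteTopology β] [MeasurableSpace β] {ν : Measure (ℕ → β)}
    (h : ∀ x n, ν (PiNat.cylinder x n) ≠ 0) : ν.IsOpenPosMeasure := by
  refine ⟨fun U hU ⟨x, hx⟩ => ?_⟩
  obtain ⟨_, ⟨y, n, rfl⟩, -, hsub⟩ :=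
    (PiNat.isTopologicalBasis_cylinders fun _ => β).exists_subset_of_mem_open hx hU
  exact fun hU0 => h y n (measure_mono_null hsub hU0)

namespace MeasureTheory.L2

variable {α : Type*} [MeasurableSpace α] {μ : Measure α}

lemma norm_sq_eq_integral_sq (g : Lp ℝ 2 μ) : ‖g‖ ^ 2 = ∫ x, g x ^ 2 ∂μ := by
  rw [← real_inner_self_eq_norm_sq, inner_def]
  simp [sq]

lemma isSelfAdjoint_of_coeFn_ae_eq_mul {f : α → ℝ} {M : Lp ℝ 2 μ →L[ℝ] Lp ℝ 2 μ}
    (hM : ∀ g, M g =ᵐ[μ] fun x => f x * g x) : IsSelfAdjoint M := by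
  refine ((eq_adjoint_iff M M).2 fun g h => ?_).symm
  rw [inner_def, inner_def]
  refine integral_congr_ae ?_
  filter_upwards [hM g, hM h] with x hg hh
  simp only [RCLike.inner_apply, conj_trivial, hg, hh]
  ring

lemma coeFn_comp_sub_comp_ae_eq {σ : α → α} (hσ : Measure.QuasiMeasurePreserving σ μ μ)
    {f : α → ℝ} {K M : Lp ℝ 2 μ →L[ℝ] Lp ℝ 2 μ} (hK : ∀ g, K g =ᵐ[μ] fun x => g (σ x))
    (hM : ∀ g, M g =ᵐ[μ] fun x => f x * g x) (g : Lp ℝ 2 μ) :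
    (K ∘L M - M ∘L K) g =ᵐ[μ] fun x => (f (σ x) - f x) * g (σ x) := by
  have hMσ : (M g : α → ℝ) ∘ σ =ᵐ[μ] (fun x => f x * g x) ∘ σ := hσ.ae_eq_comp (hM g)
  filter_upwards [Lp.coeFn_sub (K (M g)) (M (K g)), hK (M g), hMσ, hM (K g), hK g]
    with x hsub hKM hMσx hMK hKg
  simp only [comp_apply, sub_apply, hsub, Pi.sub_apply, hKM, hMK, hKg]
  simp only [Function.comp_apply] at hMσx
  rw [hMσx]
  ring

end MeasureTheory.L2

section MultiplicationNorm

variable {α F : Type*} [TopologicalSpace α] [CompactSpace α] [MeasurableSpace α]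
  [OpensMeasurableSpace α] {μ : Measure α}
  [NormedAddCommGroup F] [NormedSpace ℝ F] {T : Lp ℝ 2 μ →L[ℝ] F} {G : C(α, ℝ)}

lemma opNorm_le_sqrt_of_norm_sq_eq_integral
    (hT : ∀ g : Lp ℝ 2 μ, ‖T g‖ ^ 2 = ∫ x, G x * g x ^ 2 ∂μ) {c : ℝ} (hc : ∀ x, G x ≤ c) :
    ‖T‖ ≤ √c := by
  refine T.opNorm_le_bound (Real.sqrt_nonneg c) fun g => ?_
  have hg : Integrable (fun x => g x ^ 2) μ := (Lp.memLp g).integrable_sq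
  have hTg : ‖T g‖ ^ 2 ≤ c * ‖g‖ ^ 2 := by
    rw [hT, L2.norm_sq_eq_integral_sq, ← integral_const_mul]
    refine integral_mono (hg.bdd_mul G.continuous.aestronglyMeasurable
      (.of_forall G.norm_coe_le_norm)) (hg.const_mul c) fun x => ?_
    exact mul_le_mul_of_nonneg_right (hc x) (sq_nonneg _)
  calc ‖T g‖ = √(‖T g‖ ^ 2) := (Real.sqrt_sq (norm_nonneg _)).symm
    _ ≤ √(c * ‖g‖ ^ 2) := Real.sqrt_le_sqrt hTg
    _ = √c * ‖g‖ := by rw [Real.sqrt_mul' c (sq_nonneg _), Real.sqrt_sq (norm_nonneg _)]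

lemma sqrt_le_opNorm_of_norm_sq_eq_integral [IsFiniteMeasure μ] [μ.IsOpenPosMeasure]
    (hT : ∀ g : Lp ℝ 2 μ, ‖T g‖ ^ 2 = ∫ x, G x * g x ^ 2 ∂μ) (x₀ : α) :
    √(G x₀) ≤ ‖T‖ := by
  suffices G x₀ ≤ ‖T‖ ^ 2 by
    simpa [Real.sqrt_sq (norm_nonneg T)] using Real.sqrt_le_sqrt this
  refine le_of_forall_pos_le_add fun ε hε => ?_
  set s := {x | G x₀ - ε < G x}
  have hs : IsOpen s := isOpen_lt continuous_const G.continuous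
  have hμs : 0 < μ.real s :=
    ENNReal.toReal_pos (hs.measure_ne_zero μ ⟨x₀, by simpa [s] using hε⟩) (measure_ne_top μ s)
  set g : Lp ℝ 2 μ := indicatorConstLp 2 hs.measurableSet (measure_ne_top μ s) 1
  have hg_sq : (fun x => g x ^ 2) =ᵐ[μ] s.indicator 1 := by
    have hg : g =ᵐ[μ] s.indicator fun _ => (1 : ℝ) := indicatorConstLp_coeFn
    filter_upwards [hg] with x hx
    by_cases hxs : x ∈ s <;> simp [g, hx, hxs]
  have hg_norm : ‖g‖ ^ 2 = μ.real s := by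
    rw [L2.norm_sq_eq_integral_sq, integral_congr_ae hg_sq, integral_indicator_one hs.measurableSet]
  have hTg : ‖T g‖ ^ 2 = ∫ x in s, G x ∂μ := by
    rw [hT, ← integral_indicator hs.measurableSet]
    refine integral_congr_ae ?_
    filter_upwards [hg_sq] with x hx
    by_cases hxs : x ∈ s <;> simp [hx, hxs]
  have hlow : (G x₀ - ε) * μ.real s ≤ ‖T‖ ^ 2 * μ.real s :=
    calc (G x₀ - ε) * μ.real s = ∫ _ in s, (G x₀ - ε) ∂μ := by
          rw [setIntegral_const, smul_eq_mul, mul_comm]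
      _ ≤ ∫ x in s, G x ∂μ :=
          setIntegral_mono_on (integrableOn_const (measure_ne_top μ s))
            (G.continuous.integrable_of_hasCompactSupport
              (.of_compactSpace _)).integrableOn hs.measurableSet fun x hx => hx.le
      _ = ‖T g‖ ^ 2 := hTg.symm
      _ ≤ (‖T‖ * ‖g‖) ^ 2 := by gcongr; exact T.le_opNorm g
      _ = ‖T‖ ^ 2 * μ.real s := by rw [mul_pow, hg_norm]
  linarith [le_of_mul_le_mul_right hlow hμs]

lemma opNorm_eq_iSup_sqrt_of_norm_sq_eq_integral [Nonempty α] [IsFiniteMeasure μ]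
    [μ.IsOpenPosMeasure]
    (hT : ∀ g : Lp ℝ 2 μ, ‖T g‖ ^ 2 = ∫ x, G x * g x ^ 2 ∂μ) :
    ‖T‖ = ⨆ x, √(G x) := by
  obtain ⟨x₀, -, hx₀⟩ :=
    isCompact_univ.exists_isMaxOn Set.univ_nonempty G.continuous.continuousOn
  have hbdd : BddAbove (Set.range fun x => √(G x)) :=
    ⟨√(G x₀), by rintro _ ⟨x, rfl⟩; exact Real.sqrt_le_sqrt (hx₀ (Set.mem_univ x))⟩
  refine le_antisymm ?_ (ciSup_le (sqrt_le_opNorm_of_norm_sq_eq_integral hT))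
  exact (opNorm_le_sqrt_of_norm_sq_eq_integral hT fun x => hx₀ (Set.mem_univ x)).trans
    (le_ciSup hbdd x₀)

end MultiplicationNorm

lemma norm_adjoint_comp_sub_comp {𝕜 H : Type*} [RCLike 𝕜] [NormedAddCommGroup H]
    [InnerProductSpace 𝕜 H] [CompleteSpace H] (K A : H →L[𝕜] H) (hA : IsSelfAdjoint A) :
    ‖adjoint K ∘L A - A ∘L adjoint K‖ = ‖K ∘L A - A ∘L K‖ := by
  have h : adjoint (K ∘L A - A ∘L K) = -(adjoint K ∘L A - A ∘L adjoint K) := by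
    rw [map_sub, adjoint_comp, adjoint_comp, hA.adjoint_eq, neg_sub]
  rw [← norm_neg, ← h, adjoint.norm_map]

lemma cylinder_ofFn (x : Ω) (n : ℕ) :
    cylinder (List.ofFn fun i : Fin n => x i) = PiNat.cylinder x n := by
  ext y
  simp [_root_.cylinder, PiNat.mem_cylinder_iff, Fin.forall_iff]

lemma preimage_consSeq_piNatCylinder_succ (a : Bool) (x : Ω) (n : ℕ) :
    consSeq a ⁻¹' PiNat.cylinder x (n + 1) =
      if a = x 0 then PiNat.cylinder (shiftMap x) n else ∅ := by
  ext y
  simp only [Set.mem_preimage, PiNat.mem_cylinder_iff, Nat.forall_lt_succ_left]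
  split_ifs with h <;> simp [consSeq, shiftMap, h]

lemma shiftMap_consSeq (a : Bool) (x : Ω) : shiftMap (consSeq a x) = x := rfl

lemma shiftMap_comp_consSeq (a : Bool) : shiftMap ∘ consSeq a = id := rfl

def IsUniformBernoulli (μ : Measure Ω) : Prop :=
  ∀ w : List Bool, μ (cylinder w) = (1 / 2) ^ w.length

namespace IsUniformBernoulli

variable {μ : Measure Ω}

lemma measure_piNatCylinder (hμ : IsUniformBernoulli μ) (x : Ω) (n : ℕ) :
    μ (PiNat.cylinder x n) = 2⁻¹ ^ n := by
  simpa [cylinder_ofFn] using hμ (List.ofFn fun i : Fin n => x i)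

lemma isOpenPosMeasure (hμ : IsUniformBernoulli μ) : μ.IsOpenPosMeasure :=
  Measure.isOpenPosMeasure_of_piNatCylinder fun x n => by simp [hμ.measure_piNatCylinder]

variable [IsFiniteMeasure μ]

lemma eq_half_smul_map_consSeq_add (hμ : IsUniformBernoulli μ) :
    μ = (2⁻¹ : ℝ≥0∞) • μ.map (consSeq false) + (2⁻¹ : ℝ≥0∞) • μ.map (consSeq true) := by
  refine Measure.ext_of_piNatCylinder fun x n => ?_
  simp only [Measure.add_apply, Measure.smul_apply, smul_eq_mul,
    Measure.map_apply (continuous_consSeq _).measurable (PiNat.isOpen_cylinder _ _ _).measurableSet]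
  cases n with
  | zero => simp [PiNat.cylinder_zero, ← add_mul, ENNReal.inv_two_add_inv_two]
  | succ n =>
    rw [preimage_consSeq_piNatCylinder_succ, preimage_consSeq_piNatCylinder_succ]
    cases x 0 <;> simp [hμ.measure_piNatCylinder, pow_succ']

lemma measurePreserving_shiftMap (hμ : IsUniformBernoulli μ) :
    MeasurePreserving shiftMap μ μ := by
  refine ⟨continuous_shiftMap.measurable, ?_⟩
  conv_lhs => rw [hμ.eq_half_smul_map_consSeq_add]
  rw [Measure.map_add _ _ continuous_shiftMap.measurable, Measure.map_smul, Measure.map_smul,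
    Measure.map_map continuous_shiftMap.measurable (continuous_consSeq _).measurable,
    Measure.map_map continuous_shiftMap.measurable (continuous_consSeq _).measurable,
    shiftMap_comp_consSeq, shiftMap_comp_consSeq, Measure.map_id, ← add_smul,
    ENNReal.inv_two_add_inv_two, one_smul]

lemma integral_eq_half_integral_consSeq_add (hμ : IsUniformBernoulli μ) {F : Ω → ℝ}
    (hF : Integrable F μ) :
    ∫ x, F x ∂μ = 2⁻¹ * ∫ x, F (consSeq false x) ∂μ + 2⁻¹ * ∫ x, F (consSeq true x) ∂μ := by
  have hdecomp := hμ.eq_half_smul_map_consSeq_add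
  have hF' := integrable_add_measure.1 (hdecomp ▸ hF)
  have hF₀ := (integrable_smul_measure (by simp) (by simp)).1 hF'.1
  have hF₁ := (integrable_smul_measure (by simp) (by simp)).1 hF'.2
  conv_lhs => rw [hdecomp]
  rw [integral_add_measure hF'.1 hF'.2, integral_smul_measure, integral_smul_measure,
    integral_map (continuous_consSeq _).aemeasurable hF₀.aestronglyMeasurable,
    integral_map (continuous_consSeq _).aemeasurable hF₁.aestronglyMeasurable]
  simp

lemma integral_mul_comp_shiftMap (hμ : IsUniformBernoulli μ) (H : C(Ω, ℝ)) {φ : Ω → ℝ}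
    (hφ : Integrable φ μ) :
    ∫ x, H x * φ (shiftMap x) ∂μ = ∫ x, ruelleC H x * φ x ∂μ := by
  have hφσ : Integrable (fun x => φ (shiftMap x)) μ :=
    (hμ.measurePreserving_shiftMap.integrable_comp hφ.aestronglyMeasurable).2 hφ
  have hH : ∀ a, Integrable (fun x => H (consSeq a x) * φ x) μ := fun a =>
    hφ.bdd_mul (H.continuous.comp (continuous_consSeq a)).aestronglyMeasurable
      (.of_forall fun x => H.norm_coe_le_norm _)
  rw [hμ.integral_eq_half_integral_consSeq_add
      (hφσ.bdd_mul H.continuous.aestronglyMeasurable (.of_forall H.norm_coe_le_norm))]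
  simp only [shiftMap_consSeq]
  rw [← integral_const_mul, ← integral_const_mul,
    ← integral_add ((hH false).const_mul _) ((hH true).const_mul _)]
  refine integral_congr_ae (.of_forall fun x => ?_)
  simp only [ruelleC, ContinuousMap.coe_mk]
  ring

end IsUniformBernoulli

lemma norm_sq_koopman_commutator_apply {μ : Measure Ω} [IsFiniteMeasure μ]
    (hμ : IsUniformBernoulli μ) {K M : E μ →L[ℝ] E μ}
    (hK : ∀ g : E μ, K g =ᵐ[μ] fun x => g (shiftMap x)) (f : C(Ω, ℝ))
    (hM : ∀ g : E μ, M g =ᵐ[μ] fun x => f x * g x) (g : E μ) :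
    ‖(K ∘L M - M ∘L K) g‖ ^ 2 = ∫ x, ruelleC ((koopmanC f - f) ^ 2) x * g x ^ 2 ∂μ := by
  rw [L2.norm_sq_eq_integral_sq, ← hμ.integral_mul_comp_shiftMap _ (Lp.memLp g).integrable_sq]
  refine integral_congr_ae ?_
  filter_upwards [L2.coeFn_comp_sub_comp_ae_eq
    hμ.measurePreserving_shiftMap.quasiMeasurePreserving hK hM g] with x hx
  simp only [hx, koopmanC, ContinuousMap.pow_apply, ContinuousMap.sub_apply,
    ContinuousMap.comp_apply, ContinuousMap.coe_mk]
  ring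

section Block

variable {μ : Measure Ω}

lemma commD_eq_blockAntidiag (K L A : E μ →L[ℝ] E μ) :
    commD K L A = blockAntidiag (K ∘L A - A ∘L K) (L ∘L A - A ∘L L) := by
  ext x : 1
  exact (WithLp.equiv 2 _).injective (Prod.ext rfl rfl)

lemma norm_blockAntidiag (A₁ A₂ : E μ →L[ℝ] E μ) :
    ‖blockAntidiag A₁ A₂‖ = max ‖A₁‖ ‖A₂‖ := by
  refine le_antisymm (opNorm_le_bound _ (by positivity) fun x => ?_) (max_le ?_ ?_)
  · set M := max ‖A₁‖ ‖A₂‖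
    have h₁ : ‖A₁ x.snd‖ ≤ M * ‖x.snd‖ :=
      (A₁.le_opNorm _).trans (by gcongr; exact le_max_left _ _)
    have h₂ : ‖A₂ x.fst‖ ≤ M * ‖x.fst‖ :=
      (A₂.le_opNorm _).trans (by gcongr; exact le_max_right _ _)
    have hB : ‖blockAntidiag A₁ A₂ x‖ ^ 2 = ‖A₁ x.snd‖ ^ 2 + ‖A₂ x.fst‖ ^ 2 :=
      WithLp.prod_norm_sq_eq_of_L2 _
    rw [← pow_le_pow_iff_left₀ (norm_nonneg _) (by positivity) two_ne_zero, hB, mul_pow,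
      WithLp.prod_norm_sq_eq_of_L2 x]
    nlinarith [norm_nonneg (A₁ x.snd), norm_nonneg (A₂ x.fst)]
  · refine opNorm_le_bound _ (norm_nonneg _) fun ψ => ?_
    calc ‖A₁ ψ‖ = ‖(blockAntidiag A₁ A₂ (WithLp.toLp 2 (0, ψ))).fst‖ := rfl
      _ ≤ ‖blockAntidiag A₁ A₂ (WithLp.toLp 2 (0, ψ))‖ := WithLp.norm_fst_le _ _
      _ ≤ ‖blockAntidiag A₁ A₂‖ * ‖ψ‖ := by
        simpa only [WithLp.norm_toLp_snd] using le_opNorm _ (WithLp.toLp 2 ((0 : E μ), ψ))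
  · refine opNorm_le_bound _ (norm_nonneg _) fun φ => ?_
    calc ‖A₂ φ‖ = ‖(blockAntidiag A₁ A₂ (WithLp.toLp 2 (φ, 0))).snd‖ := rfl
      _ ≤ ‖blockAntidiag A₁ A₂ (WithLp.toLp 2 (φ, 0))‖ := WithLp.norm_snd_le _ _
      _ ≤ ‖blockAntidiag A₁ A₂‖ * ‖φ‖ := by
        simpa only [WithLp.norm_toLp_fst] using le_opNorm _ (WithLp.toLp 2 (φ, (0 : E μ)))

end Block

theorem stmt15_general
    (μ : Measure Ω) [IsProbabilityMeasure μ]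
    (hμ : ∀ w : List Bool, μ (cylinder w) = (1 / 2) ^ w.length)
    (K L : E μ →L[ℝ] E μ)
    (hK : ∀ g : E μ, (K g : Ω → ℝ) =ᵐ[μ] fun x => g (shiftMap x))
    (hadj : ContinuousLinearMap.adjoint K = L)
    (f : C(Ω, ℝ)) (Mf : E μ →L[ℝ] E μ)
    (hMf : ∀ g : E μ, (Mf g : Ω → ℝ) =ᵐ[μ] fun x => f x * g x) :
    ‖commD K L Mf‖ = (⨆ x : Ω, Real.sqrt (ruelleC ((koopmanC f - f) ^ 2) x)) ∧
    (⨆ x : Ω, Real.sqrt (ruelleC ((koopmanC f - f) ^ 2) x)) =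
      ⨆ x : Ω, Real.sqrt ((f x - f (consSeq false x)) ^ 2 / 2
        + (f x - f (consSeq true x)) ^ 2 / 2) := by
  have := IsUniformBernoulli.isOpenPosMeasure hμ
  have hcomm : ‖K ∘L Mf - Mf ∘L K‖ = ⨆ x, √(ruelleC ((koopmanC f - f) ^ 2) x) :=
    opNorm_eq_iSup_sqrt_of_norm_sq_eq_integral (norm_sq_koopman_commutator_apply hμ hK f hMf)
  refine ⟨?_, iSup_congr fun x => congrArg _ ?_⟩
  · rw [commD_eq_blockAntidiag, norm_blockAntidiag, ← hadj,
      norm_adjoint_comp_sub_comp K Mf (L2.isSelfAdjoint_of_coeFn_ae_eq_mul hMf), max_self, hcomm]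
  · simp only [ruelleC, koopmanC, ContinuousMap.coe_mk, ContinuousMap.pow_apply,
      ContinuousMap.sub_apply, ContinuousMap.comp_apply, shiftMap_consSeq]
    ring

/-- `‖[D, π(M_f)]‖ = |√(L(|Kf − f|²))|_∞
= sup_x √(|f(x) − f(0x)|²/2 + |f(x) − f(1x)|²/2)`. -/
theorem stmt15
    (μ : Measure Ω) [IsProbabilityMeasure μ]
    (hμ : ∀ w : List Bool, μ (cylinder w) = (1 / 2) ^ w.length)
    (K L : E μ →L[ℝ] E μ)
    (hK : ∀ g : E μ, (K g : Ω → ℝ) =ᵐ[μ] fun x => g (shiftMap x))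
    (hL : ∀ g : E μ, (L g : Ω → ℝ) =ᵐ[μ]
      fun x => (g (consSeq false x) + g (consSeq true x)) / 2)
    (hadj : ContinuousLinearMap.adjoint K = L)
    (f : C(Ω, ℝ)) (Mf : E μ →L[ℝ] E μ)
    (hMf : ∀ g : E μ, (Mf g : Ω → ℝ) =ᵐ[μ] fun x => f x * g x) :
    ‖commD K L Mf‖ = (⨆ x : Ω, Real.sqrt (ruelleC ((koopmanC f - f) ^ 2) x)) ∧
    (⨆ x : Ω, Real.sqrt (ruelleC ((koopmanC f - f) ^ 2) x)) =
      ⨆ x : Ω, Real.sqrt ((f x - f (consSeq false x)) ^ 2 / 2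
        + (f x - f (consSeq true x)) ^ 2 / 2) :=
  stmt15_general μ hμ K L hK hadj f Mf hMf
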